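/- arXiv:2301.06368 — 6 statements merged into one kernel-verified Lean document; each statement's English description precedes it below -/
import Mathlib

section
/- The dual cone of FW_n(k) with respect to the trace inner product is {S ∈ S^n : S_{J,J} ⪰ 0 for all J ⊆ [n] with |J| = k}, i.e., the set of symmetric matrices all of whose k×k principal submatrices are positive semidefinite. -/
open Matrix Finset

/-- Embed a matrix indexed by a `k`-subset `J` of `Fin n` as the principal submatrix
indexed by `J` of an `n × n` matrix, with zeros elsewhere (the map `S ↦ S^{→n}`). -/
def Matrix.embed {n : ℕ} (J : Finset (Fin n)) (S : Matrix ↥J ↥J ℝ) :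
    Matrix (Fin n) (Fin n) ℝ := fun i j =>
  if hi : i ∈ J then if hj : j ∈ J then S ⟨i, hi⟩ ⟨j, hj⟩ else 0 else 0

/-- The factor-width-`k` cone `FW_n(k)`: matrices expressible as a finite sum of
rank-one terms `x xᵀ` where each `x` has at most `k` nonzero entries. -/
def FW (n k : ℕ) : Set (Matrix (Fin n) (Fin n) ℝ) :=
  {X | ∃ (N : ℕ) (v : Fin N → (Fin n → ℝ)),
    (∀ i, (Finset.univ.filter (fun j => v i j ≠ 0)).card ≤ k) ∧
    X = ∑ i, Matrix.vecMulVec (v i) (v i)}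

/-!
Both sides say that the quadratic form `x ↦ xᵀ S x` is nonnegative on vectors with at most
`k` nonzero entries: testing against `FW_n(k)` means testing against its generators `x xᵀ`,
where `tr(S x xᵀ) = xᵀ S x`; and such an `x` is supported in some `k`-set `J`, on which
`xᵀ S x` is the quadratic form of `S_{J,J}`.
-/

namespace Matrix

variable {ι R : Type*} [Fintype ι] [CommSemiring R]

theorem trace_mul_vecMulVec_self (S : Matrix ι ι R) (x : ι → R) :
    (S * vecMulVec x x).trace = x ⬝ᵥ S *ᵥ x := by
  rw [mul_vecMulVec, trace_vecMulVec, dotProduct_comm]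

theorem dotProduct_eq_subtype_of_support_subset {J : Finset ι} {x : ι → R}
    (hx : ∀ i ∉ J, x i = 0) (u : ι → R) :
    u ⬝ᵥ x = (fun i : J => u i) ⬝ᵥ (fun i : J => x i) := by
  simp only [dotProduct]
  rw [Finset.sum_coe_sort J (fun i => u i * x i)]
  exact (Finset.sum_subset (subset_univ J) fun i _ hi => by rw [hx i hi, mul_zero]).symm

theorem dotProduct_mulVec_eq_submatrix_of_support_subset {J : Finset ι} {x : ι → R}
    (hx : ∀ i ∉ J, x i = 0) (S : Matrix ι ι R) :
    x ⬝ᵥ S *ᵥ x =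
      (fun i : J => x i) ⬝ᵥ S.submatrix (↑) (↑) *ᵥ (fun i : J => x i) := by
  have hSx : (fun i : J => (S *ᵥ x) i) = S.submatrix (↑) (↑) *ᵥ (fun i : J => x i) :=
    funext fun i => dotProduct_eq_subtype_of_support_subset hx (S i)
  rw [dotProduct_comm, dotProduct_eq_subtype_of_support_subset hx, hSx, dotProduct_comm]

end Matrix

theorem forall_mem_FW_trace_mul_nonneg_iff {n k : ℕ} (S : Matrix (Fin n) (Fin n) ℝ) :
    (∀ X ∈ FW n k, 0 ≤ (S * X).trace) ↔
      ∀ x : Fin n → ℝ, #{j | x j ≠ 0} ≤ k → 0 ≤ x ⬝ᵥ S *ᵥ x := by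
  constructor
  · intro hS x hx
    rw [← trace_mul_vecMulVec_self]
    exact hS _ ⟨1, fun _ => x, fun _ => hx, by simp⟩
  · rintro hS X ⟨N, v, hv, rfl⟩
    rw [Finset.mul_sum, trace_sum]
    exact Finset.sum_nonneg fun i _ => trace_mul_vecMulVec_self S (v i) ▸ hS (v i) (hv i)

theorem forall_card_eq_submatrix_posSemidef_iff {ι : Type*} [Fintype ι]
    {S : Matrix ι ι ℝ} (hS : S.IsHermitian) {k : ℕ} (hk : k ≤ Fintype.card ι) :
    (∀ J : Finset ι, #J = k → (S.submatrix ((↑) : J → ι) (↑)).PosSemidef) ↔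
      ∀ x : ι → ℝ, #{i | x i ≠ 0} ≤ k → 0 ≤ x ⬝ᵥ S *ᵥ x := by
  constructor
  · intro hpsd x hx
    obtain ⟨J, hsupp, -, hJ⟩ := exists_subsuperset_card_eq (subset_univ _) hx hk
    have hxJ : ∀ i ∉ J, x i = 0 := fun i hi => by_contra fun h => hi (hsupp (by simpa using h))
    rw [dotProduct_mulVec_eq_submatrix_of_support_subset hxJ]
    simpa using (hpsd J hJ).dotProduct_mulVec_nonneg (fun i : J => x i)
  · classical
    intro hx J hJ
    refine PosSemidef.of_dotProduct_mulVec_nonneg (hS.submatrix _) fun y => ?_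
    let x : ι → ℝ := fun i => if h : i ∈ J then y ⟨i, h⟩ else 0
    have hxJ : ∀ i ∉ J, x i = 0 := fun i hi => dif_neg hi
    have hxy : (fun i : J => x i) = y := funext fun i => dif_pos i.2
    have hcard : #{i | x i ≠ 0} ≤ k :=
      hJ ▸ card_le_card fun i hi => by_contra fun h => (mem_filter.mp hi).2 (hxJ i h)
    simpa [← hxy, ← dotProduct_mulVec_eq_submatrix_of_support_subset hxJ] using hx x hcard

theorem factor_width_dual_cone_general {n k : ℕ} (hkn : k ≤ n) :
    {S : Matrix (Fin n) (Fin n) ℝ | S.IsSymm ∧ ∀ X ∈ FW n k, 0 ≤ (S * X).trace} =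
    {S : Matrix (Fin n) (Fin n) ℝ | S.IsSymm ∧ ∀ J : Finset (Fin n), J.card = k →
      (S.submatrix (fun i : ↥J => (i : Fin n)) (fun j : ↥J => (j : Fin n))).PosSemidef} := by
  ext S
  refine and_congr_right fun hS => ?_
  rw [forall_mem_FW_trace_mul_nonneg_iff,
    forall_card_eq_submatrix_posSemidef_iff (isHermitian_iff_isSymm.mpr hS) (by simpa using hkn)]

/-- the dual cone of `FW n k` w.r.t. the trace inner product is the
set of symmetric matrices all of whose `k × k` principal submatrices are PSD. -/
theorem factor_width_dual_cone {n k : ℕ} (hk : 1 ≤ k) (hkn : k ≤ n) :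
    {S : Matrix (Fin n) (Fin n) ℝ | S.IsSymm ∧ ∀ X ∈ FW n k, 0 ≤ (S * X).trace} =
    {S : Matrix (Fin n) (Fin n) ℝ | S.IsSymm ∧ ∀ J : Finset (Fin n), J.card = k →
      (S.submatrix (fun i : ↥J => (i : Fin n)) (fun j : ↥J => (j : Fin n))).PosSemidef} :=
  factor_width_dual_cone_general hkn
end

section
/- Let k divide n and let Y = {Y_J : J ⊆ [n], |J| = k} be a collection of positive definite k×k matrices, and X = Σ_{|J|=k} (Y_J)^{→n}. Then there exist C(n−1,k−1) positive definite n×n matrices Z_1, …, Z_{C(n−1,k−1)} such that X = Σ_i Z_i and Σ_i log(det(Z_i)) = Σ_{|J|=k} log(det(Y_J)). -/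
open Matrix Finset

/-!
Baranyai's theorem is replaced by averaging over all perfect matchings obtained from one of them by
permuting `Fin n`. A matching is encoded by an equivalence `e : Fin n ≃ Fin k × Fin q`, its blocks
being the fibres of `x ↦ (e x).2`. For each matching, `B = ∑_{J ∈ e} (Y_J)^{→n}` is conjugate to a
block-diagonal matrix, so it is positive definite with `log det B = ∑_{J ∈ e} log det Y_J`. Every
`k`-set is a block of equally many of the `n!` permuted matchings, so with `m = C(n-1,k-1)` we get
`m ∑_σ B_σ = n! X` and `m ∑_σ log det B_σ = n! ∑_J log det Y_J`. Concavity of `log det`, in the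
form `log det B ≤ tr (W⁻¹ B) + log det W - n`, turns this into
`∑_J log det Y_J ≤ m log det (X / m)`.
For `m ≥ 2` every value below the right-hand side is `∑_i log det (t_i X / m)` for some `t_i > 0`
with `∑_i t_i = m`; for `m = 1` the matching is unique and `X = B`.
-/

theorem Real.exists_pos_sum_eq_prod_eq {m : ℕ} (hm : 2 ≤ m) {P : ℝ} (hP₀ : 0 < P) (hP₁ : P ≤ 1) :
    ∃ t : Fin m → ℝ, (∀ i, 0 < t i) ∧ ∑ i, t i = m ∧ ∏ i, t i = P := by
  obtain ⟨m, rfl⟩ := Nat.exists_eq_add_of_le' hm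
  set r := √(1 - P)
  have hr : r < 1 := (Real.sqrt_lt' one_pos).mpr (by linarith)
  have hr₀ : 0 ≤ r := Real.sqrt_nonneg _
  have hr₂ : r ^ 2 = 1 - P := Real.sq_sqrt (by linarith)
  refine ⟨Fin.cons (1 - r) (Fin.cons (1 + r) fun _ => 1), fun i => ?_, ?_, ?_⟩
  · refine Fin.cases ?_ (Fin.cases ?_ fun _ => ?_) i <;> simp <;> linarith
  · simp only [Fin.sum_cons, sum_const, card_univ, Fintype.card_fin, nsmul_eq_mul, mul_one]
    push_cast
    ring
  · simp only [Fin.prod_cons, prod_const_one, mul_one]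
    nlinarith

theorem Nat.choose_mul_eq_mul_choose_pred {k q : ℕ} (hk : 0 < k) (hq : 0 < q) :
    (k * q).choose k = q * (k * q - 1).choose (k - 1) := by
  have h := Nat.add_one_mul_choose_eq (k * q - 1) (k - 1)
  rw [Nat.sub_add_cancel (Nat.one_le_iff_ne_zero.mpr (Nat.mul_pos hk hq).ne'),
    Nat.sub_add_cancel hk] at h
  apply Nat.eq_of_mul_eq_mul_left hk
  rw [mul_comm, ← h]
  ring

theorem MulAction.card_nsmul_sum_smul {G X M : Type*} [Group G] [Fintype G] [MulAction G X]
    [Fintype X] [IsPretransitive G X] [AddCommMonoid M] (f : X → M) (x : X) :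
    Fintype.card X • ∑ g : G, f (g • x) = Fintype.card G • ∑ y, f y := by
  have hindep : ∀ y : X, ∑ g : G, f (g • y) = ∑ g : G, f (g • x) := fun y => by
    obtain ⟨h, rfl⟩ := exists_smul_eq G x y
    simp_rw [smul_smul]
    exact Equiv.sum_comp (Equiv.mulRight h) fun g => f (g • x)
  calc Fintype.card X • ∑ g : G, f (g • x)
      = ∑ y : X, ∑ g : G, f (g • y) := by
        rw [sum_congr rfl fun y _ => hindep y, sum_const, card_univ]
    _ = ∑ g : G, ∑ y : X, f y := by
        rw [sum_comm]
        exact sum_congr rfl fun g _ => Equiv.sum_comp (MulAction.toPerm g) f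
    _ = Fintype.card G • ∑ y, f y := by rw [sum_const, card_univ]

open scoped Pointwise in
theorem Finset.choose_nsmul_sum_perm_smul {α M : Type*} [Fintype α] [DecidableEq α]
    [AddCommMonoid M] (g : Finset α → M) (A : Finset α) :
    (Fintype.card α).choose #A • ∑ σ : Equiv.Perm α, g (σ • A) =
      (Fintype.card α).factorial • ∑ J ∈ univ.filter (fun J : Finset α => #J = #A), g J := by
  have := Set.powersetCard.isPretransitive (α := α) (n := #A)
  have h := MulAction.card_nsmul_sum_smul (G := Equiv.Perm α)
    (fun J : Set.powersetCard α #A => g J) ⟨A, rfl⟩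
  rw [Fintype.card_perm, ← Nat.card_eq_fintype_card, Set.powersetCard.card,
    Nat.card_eq_fintype_card] at h
  convert h using 2
  · simp
  · exact sum_subtype _ (fun J => by simp [Set.powersetCard.mem_iff]) g

namespace Matrix

variable {p : Type*} [Fintype p] [DecidableEq p]

theorem PosDef.log_det_le_trace_sub_card {M : Matrix p p ℝ} (hM : M.PosDef) :
    Real.log M.det ≤ M.trace - Fintype.card p := by
  have hev := hM.eigenvalues_pos
  rw [hM.isHermitian.det_eq_prod_eigenvalues, hM.isHermitian.trace_eq_sum_eigenvalues]
  simp only [RCLike.ofReal_real_eq_id, id_eq]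
  rw [Real.log_prod fun i _ => (hev i).ne', Fintype.card_eq_sum_ones, Nat.cast_sum, Nat.cast_one,
    ← sum_sub_distrib]
  exact sum_le_sum fun i _ => Real.log_le_sub_one_of_pos (hev i)

open scoped MatrixOrder in
theorem PosDef.log_det_le_trace_inv_mul {W B : Matrix p p ℝ} (hW : W.PosDef) (hB : B.PosDef) :
    Real.log B.det ≤ (W⁻¹ * B).trace + Real.log W.det - Fintype.card p := by
  obtain ⟨L, rfl⟩ := CStarAlgebra.nonneg_iff_eq_star_mul_self.mp
    (nonneg_iff_posSemidef.mpr hB.posSemidef)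
  have hL : IsUnit L := by
    rw [isUnit_iff_isUnit_det, isUnit_iff_ne_zero]
    intro h
    simpa [h] using hB.det_pos
  have hM : (L * W⁻¹ * star L).PosDef := (IsUnit.posDef_star_right_conjugate_iff hL).mpr hW.inv
  have htrace : (L * W⁻¹ * star L).trace = (W⁻¹ * (star L * L)).trace := by
    rw [trace_mul_comm, ← mul_assoc, trace_mul_comm]
  have hdet : (L * W⁻¹ * star L).det = (star L * L).det * W.det⁻¹ := by
    rw [det_mul, det_mul, det_mul, det_nonsing_inv, Ring.inverse_eq_inv']
    ring
  have key := hM.log_det_le_trace_sub_card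
  rw [htrace, hdet, Real.log_mul hB.det_pos.ne' (inv_ne_zero hW.det_pos.ne'), Real.log_inv] at key
  linarith

theorem sum_log_det_le_card_mul_log_det_smul_sum {ι : Type*} [Fintype ι] [Nonempty ι]
    {B : ι → Matrix p p ℝ} (hB : ∀ i, (B i).PosDef) :
    ∑ i, Real.log (B i).det ≤
      Fintype.card ι * Real.log (((Fintype.card ι : ℝ)⁻¹) • ∑ i, B i).det := by
  set N : ℝ := (Fintype.card ι : ℝ)
  have hN : 0 < N := by simp [N, Fintype.card_pos]
  set W := N⁻¹ • ∑ i, B i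
  have hW : W.PosDef := (posDef_sum univ_nonempty fun i _ => hB i).smul (inv_pos.mpr hN)
  have htrace : ∑ i, (W⁻¹ * B i).trace = N * Fintype.card p := by
    have hsum : ∑ i, B i = N • W := by simp [W, smul_smul, hN.ne']
    rw [← trace_sum, ← Matrix.mul_sum, hsum, Matrix.mul_smul,
      nonsing_inv_mul _ hW.det_pos.ne'.isUnit, trace_smul, trace_one, smul_eq_mul]
  calc ∑ i, Real.log (B i).det
      ≤ ∑ i, ((W⁻¹ * B i).trace + Real.log W.det - Fintype.card p) :=
        sum_le_sum fun i _ => hW.log_det_le_trace_inv_mul (hB i)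
    _ = N * Real.log W.det := by
        rw [sum_sub_distrib, sum_add_distrib, htrace]
        simp [N]

open scoped ComplexOrder MatrixOrder in
theorem PosDef.blockDiagonal {𝕜 o : Type*} [RCLike 𝕜] [Fintype o] [DecidableEq o]
    {D : o → Matrix p p 𝕜} (hD : ∀ i, (D i).PosDef) : (blockDiagonal D).PosDef := by
  choose L hL using fun i => CStarAlgebra.nonneg_iff_eq_star_mul_self.mp
    (nonneg_iff_posSemidef.mpr (hD i).posSemidef)
  have hfac : Matrix.blockDiagonal D = (Matrix.blockDiagonal L)ᴴ * Matrix.blockDiagonal L := by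
    rw [blockDiagonal_conjTranspose, ← blockDiagonal_mul]
    exact congrArg _ (funext hL)
  have hpsd : (Matrix.blockDiagonal D).PosSemidef := hfac ▸ posSemidef_conjTranspose_mul_self _
  rw [hpsd.posDef_iff_det_ne_zero, det_blockDiagonal]
  exact prod_ne_zero_iff.mpr fun i _ => (hD i).det_pos.ne'

theorem PosDef.exists_sum_eq_smul_sum_log_det_eq [Nonempty p] {V : Matrix p p ℝ}
    (hV : V.PosDef) {m : ℕ} (hm : 2 ≤ m) {T : ℝ} (hT : T ≤ m * Real.log V.det) :
    ∃ Z : Fin m → Matrix p p ℝ, (∀ i, (Z i).PosDef) ∧ ∑ i, Z i = (m : ℝ) • V ∧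
      ∑ i, Real.log (Z i).det = T := by
  set d : ℝ := (Fintype.card p : ℝ)
  have hd : 0 < d := by simp [d, Fintype.card_pos]
  set s := (T - m * Real.log V.det) / d
  have hs : s ≤ 0 := div_nonpos_of_nonpos_of_nonneg (by linarith) hd.le
  obtain ⟨t, ht, hsum, hprod⟩ :=
    Real.exists_pos_sum_eq_prod_eq hm (Real.exp_pos s) (Real.exp_le_one_iff.mpr hs)
  refine ⟨fun i => t i • V, fun i => hV.smul (ht i), by rw [← sum_smul, hsum], ?_⟩
  have hlog i : Real.log (t i • V).det = d * Real.log (t i) + Real.log V.det := by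
    rw [det_smul, Real.log_mul (pow_pos (ht i) _).ne' hV.det_pos.ne', Real.log_pow]
  rw [sum_congr rfl fun i _ => hlog i, sum_add_distrib, ← mul_sum,
    ← Real.log_prod fun i _ => (ht i).ne', hprod, Real.log_exp, sum_const, card_univ,
    Fintype.card_fin, nsmul_eq_mul, mul_div_cancel₀ _ hd.ne']
  ring

end Matrix

section PerfectMatching

variable {n : ℕ} {κ o : Type*} [DecidableEq o]

def matchingBlock (e : Fin n ≃ κ × o) (i : o) : Finset (Fin n) :=
  univ.filter fun x => (e x).2 = i

theorem mem_matchingBlock {e : Fin n ≃ κ × o} {i : o} {x : Fin n} :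
    x ∈ matchingBlock e i ↔ (e x).2 = i := by
  simp [matchingBlock]

def matchingBlockEquiv (e : Fin n ≃ κ × o) (i : o) : κ ≃ matchingBlock e i where
  toFun a := ⟨e.symm (a, i), by simp [mem_matchingBlock]⟩
  invFun x := (e x).1
  left_inv a := by simp
  right_inv := by
    rintro ⟨x, hx⟩
    obtain rfl := mem_matchingBlock.mp hx
    simp

theorem card_matchingBlock [Fintype κ] (e : Fin n ≃ κ × o) (i : o) :
    #(matchingBlock e i) = Fintype.card κ := by
  simpa using (Fintype.card_congr (matchingBlockEquiv e i)).symm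

theorem matchingBlock_injective [Nonempty κ] (e : Fin n ≃ κ × o) :
    Function.Injective (matchingBlock e) := fun i j hij => by
  obtain ⟨a⟩ := ‹Nonempty κ›
  have : e.symm (a, i) ∈ matchingBlock e j := hij ▸ mem_matchingBlock.mpr (by simp)
  simpa using mem_matchingBlock.mp this

open scoped Pointwise in
theorem matchingBlock_symm_trans (e : Fin n ≃ κ × o) (σ : Equiv.Perm (Fin n)) (i : o) :
    matchingBlock (σ.symm.trans e) i = σ • matchingBlock e i := by
  ext x
  rw [← Finset.inv_smul_mem_iff]
  simp [mem_matchingBlock]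

variable [Fintype o]

def matchingSum (e : Fin n ≃ κ × o) (Y : (J : Finset (Fin n)) → Matrix J J ℝ) :
    Matrix (Fin n) (Fin n) ℝ :=
  ∑ i, embed (matchingBlock e i) (Y (matchingBlock e i))

theorem matchingSum_eq_submatrix_blockDiagonal (e : Fin n ≃ κ × o)
    (Y : (J : Finset (Fin n)) → Matrix J J ℝ) :
    matchingSum e Y = (blockDiagonal fun i => (Y (matchingBlock e i)).submatrix
      (matchingBlockEquiv e i) (matchingBlockEquiv e i)).submatrix e e := by
  ext x y
  obtain ⟨⟨a, i⟩, rfl⟩ := e.symm.surjective x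
  obtain ⟨⟨b, j⟩, rfl⟩ := e.symm.surjective y
  rw [matchingSum, Matrix.sum_apply, sum_eq_single i]
  · by_cases hij : i = j
    · subst hij
      simp [embed, mem_matchingBlock, matchingBlockEquiv]
    · simp [embed, mem_matchingBlock, blockDiagonal_apply, hij, Ne.symm hij]
  · intro i' _ hi'
    simp [embed, mem_matchingBlock, Ne.symm hi']
  · simp

variable [Fintype κ]

theorem sum_matchingBlock_eq_sum_card_eq [Nonempty κ] {M : Type*} [AddCommMonoid M]
    (e : Fin n ≃ κ × o) (hcard : Fintype.card o = n.choose (Fintype.card κ))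
    (g : Finset (Fin n) → M) :
    ∑ i, g (matchingBlock e i) =
      ∑ J ∈ univ.filter (fun J : Finset (Fin n) => #J = Fintype.card κ), g J := by
  have himage : univ.image (matchingBlock e) =
      univ.filter (fun J : Finset (Fin n) => #J = Fintype.card κ) := by
    refine eq_of_subset_of_card_le (fun J hJ => ?_) ?_
    · obtain ⟨i, -, rfl⟩ := mem_image.mp hJ
      simp [card_matchingBlock]
    · rw [card_image_of_injective _ (matchingBlock_injective e), card_univ, hcard,
        ← powerset_univ, ← powersetCard_eq_filter, card_powersetCard, card_univ, Fintype.card_fin]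
  rw [← himage, sum_image fun i _ j _ h => matchingBlock_injective e h]

open scoped Pointwise in
theorem choose_nsmul_sum_perm_sum_matchingBlock {M : Type*} [AddCommMonoid M]
    (e : Fin n ≃ κ × o) (g : Finset (Fin n) → M) :
    n.choose (Fintype.card κ) •
        ∑ σ : Equiv.Perm (Fin n), ∑ i, g (matchingBlock (σ.symm.trans e) i) =
      Fintype.card o • n.factorial •
        ∑ J ∈ univ.filter (fun J : Finset (Fin n) => #J = Fintype.card κ), g J := by
  have h i := choose_nsmul_sum_perm_smul g (matchingBlock e i)
  simp only [card_matchingBlock, Fintype.card_fin] at h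
  simp_rw [matchingBlock_symm_trans]
  rw [sum_comm, smul_sum]
  simp_rw [h, sum_const, card_univ]

variable [DecidableEq κ]

theorem posDef_matchingSum (e : Fin n ≃ κ × o) {Y : (J : Finset (Fin n)) → Matrix J J ℝ}
    (hY : ∀ J : Finset (Fin n), #J = Fintype.card κ → (Y J).PosDef) :
    (matchingSum e Y).PosDef := by
  rw [matchingSum_eq_submatrix_blockDiagonal]
  exact (PosDef.blockDiagonal fun i => (hY _ (card_matchingBlock e i)).submatrix
    (matchingBlockEquiv e i).injective).submatrix e.injective

theorem det_matchingSum (e : Fin n ≃ κ × o) (Y : (J : Finset (Fin n)) → Matrix J J ℝ) :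
    (matchingSum e Y).det = ∏ i, (Y (matchingBlock e i)).det := by
  simp_rw [matchingSum_eq_submatrix_blockDiagonal, det_submatrix_equiv_self, det_blockDiagonal,
    det_submatrix_equiv_self]

theorem log_det_matchingSum (e : Fin n ≃ κ × o) {Y : (J : Finset (Fin n)) → Matrix J J ℝ}
    (hY : ∀ J : Finset (Fin n), #J = Fintype.card κ → (Y J).PosDef) :
    Real.log (matchingSum e Y).det = ∑ i, Real.log (Y (matchingBlock e i)).det := by
  rw [det_matchingSum, Real.log_prod fun i _ => (hY _ (card_matchingBlock e i)).det_pos.ne']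

end PerfectMatching

section
variable {k q : ℕ} (hk : 0 < k) (hq : 0 < q)
include hk hq

theorem choose_pred_smul_sum_perm_sum_matchingBlock {M : Type*} [AddCommGroup M] [Module ℝ M]
    (e : Fin (k * q) ≃ Fin k × Fin q) (g : Finset (Fin (k * q)) → M) :
    ((k * q - 1).choose (k - 1) : ℝ) •
        ∑ σ : Equiv.Perm (Fin (k * q)), ∑ i, g (matchingBlock (σ.symm.trans e) i) =
      ((k * q).factorial : ℝ) •
        ∑ J ∈ univ.filter (fun J : Finset (Fin (k * q)) => #J = k), g J := by
  have h := choose_nsmul_sum_perm_sum_matchingBlock e g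
  simp only [Fintype.card_fin, Nat.choose_mul_eq_mul_choose_pred hk hq, ← Nat.cast_smul_eq_nsmul ℝ,
    smul_smul, Nat.cast_mul] at h
  have hq' : (q : ℝ) ≠ 0 := by positivity
  have := congrArg ((q : ℝ)⁻¹ • ·) h
  simpa [smul_smul, ← mul_assoc, inv_mul_cancel₀ hq'] using this

theorem sum_card_eq_eq_sum_matchingBlock_of_choose_pred_eq_one {M : Type*} [AddCommMonoid M]
    (hm : (k * q - 1).choose (k - 1) = 1) (g : Finset (Fin (k * q)) → M) :
    ∑ J ∈ univ.filter (fun J : Finset (Fin (k * q)) => #J = k), g J =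
      ∑ i, g (matchingBlock finProdFinEquiv.symm i) := by
  have : Nonempty (Fin k) := ⟨⟨0, hk⟩⟩
  have hcard : Fintype.card (Fin q) = (k * q).choose (Fintype.card (Fin k)) := by
    simp [Nat.choose_mul_eq_mul_choose_pred hk hq, hm]
  rw [sum_matchingBlock_eq_sum_card_eq _ hcard, Fintype.card_fin]

variable {Y : (J : Finset (Fin (k * q))) → Matrix J J ℝ}
  (hY : ∀ J : Finset (Fin (k * q)), #J = k → (Y J).PosDef)
include hY

theorem posDef_sum_embed :
    (∑ J ∈ univ.filter (fun J : Finset (Fin (k * q)) => #J = k), embed J (Y J)).PosDef := by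
  set e : Fin (k * q) ≃ Fin k × Fin q := finProdFinEquiv.symm
  have hB (σ : Equiv.Perm (Fin (k * q))) : (matchingSum (σ.symm.trans e) Y).PosDef :=
    posDef_matchingSum _ fun J hJ => hY J (hJ.trans (Fintype.card_fin k))
  have hm : (0 : ℝ) < (k * q - 1).choose (k - 1) := by
    exact_mod_cast Nat.choose_pos (Nat.sub_le_sub_right (Nat.le_mul_of_pos_right k hq) 1)
  have hN : (0 : ℝ) < (k * q).factorial := by exact_mod_cast Nat.factorial_pos _
  have h := choose_pred_smul_sum_perm_sum_matchingBlock hk hq e fun J => embed J (Y J)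
  rw [← inv_smul_eq_iff₀ hN.ne'] at h
  rw [← h]
  exact ((posDef_sum univ_nonempty fun σ _ => hB σ).smul hm).smul (inv_pos.mpr hN)

theorem sum_log_det_le_choose_mul_log_det :
    ∑ J ∈ univ.filter (fun J : Finset (Fin (k * q)) => #J = k), Real.log (Y J).det ≤
      (k * q - 1).choose (k - 1) * Real.log
        ((((k * q - 1).choose (k - 1) : ℝ))⁻¹ •
          ∑ J ∈ univ.filter (fun J : Finset (Fin (k * q)) => #J = k), embed J (Y J)).det := by
  set e : Fin (k * q) ≃ Fin k × Fin q := finProdFinEquiv.symm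
  have hY' J (hJ : #J = Fintype.card (Fin k)) : (Y J).PosDef := hY J (hJ.trans (Fintype.card_fin k))
  have hmat := choose_pred_smul_sum_perm_sum_matchingBlock hk hq e fun J => embed J (Y J)
  have hlog := choose_pred_smul_sum_perm_sum_matchingBlock hk hq e fun J => Real.log (Y J).det
  have hjensen := sum_log_det_le_card_mul_log_det_smul_sum
    (B := fun σ : Equiv.Perm (Fin (k * q)) => matchingSum (σ.symm.trans e) Y)
    fun σ => posDef_matchingSum _ hY'
  simp only [Fintype.card_perm, Fintype.card_fin, log_det_matchingSum _ hY'] at hjensen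
  simp only [smul_eq_mul] at hlog
  set m : ℝ := ((k * q - 1).choose (k - 1) : ℝ)
  set N : ℝ := ((k * q).factorial : ℝ)
  have hm : 0 < m :=
    Nat.cast_pos.mpr (Nat.choose_pos (Nat.sub_le_sub_right (Nat.le_mul_of_pos_right k hq) 1))
  have hN : 0 < N := Nat.cast_pos.mpr (Nat.factorial_pos _)
  have havg : N⁻¹ • ∑ σ : Equiv.Perm (Fin (k * q)), matchingSum (σ.symm.trans e) Y =
      m⁻¹ • ∑ J ∈ univ.filter (fun J : Finset (Fin (k * q)) => #J = k), embed J (Y J) := by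
    unfold matchingSum
    rw [(eq_inv_smul_iff₀ hm.ne').mpr hmat, smul_comm, inv_smul_smul₀ hN.ne']
  rw [havg] at hjensen
  refine le_of_mul_le_mul_left ?_ hN
  linarith [mul_le_mul_of_nonneg_left hjensen hm.le]

end

/-- if `k ∣ n` and `X = Σ_{|J|=k} (Y_J)^{→n}` with all `Y_J ≻ 0`,
then `X` splits as a sum of `C(n−1,k−1)` positive definite matrices `Z_i` with
`Σ_i log det Z_i = Σ_J log det Y_J` (via Baranyai's theorem). -/
theorem baranyai_splitting {n k : ℕ} (hk : 0 < k) (hdvd : k ∣ n)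
    (Y : (J : Finset (Fin n)) → Matrix ↥J ↥J ℝ)
    (hY : ∀ J : Finset (Fin n), J.card = k → (Y J).PosDef)
    (X : Matrix (Fin n) (Fin n) ℝ)
    (hX : X = ∑ J ∈ Finset.univ.filter (fun J : Finset (Fin n) => J.card = k),
            Matrix.embed J (Y J)) :
    ∃ Z : Fin (Nat.choose (n - 1) (k - 1)) → Matrix (Fin n) (Fin n) ℝ,
      (∀ i, (Z i).PosDef) ∧ X = ∑ i, Z i ∧
      ∑ i, Real.log (Z i).det =
        ∑ J ∈ Finset.univ.filter (fun J : Finset (Fin n) => J.card = k),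
          Real.log (Y J).det := by
  rcases Nat.eq_zero_or_pos n with rfl | hn
  · exact ⟨fun _ => X,
      fun _ => ⟨Subsingleton.elim _ _, fun x hx => (hx (Subsingleton.elim _ _)).elim⟩,
      Subsingleton.elim _ _, by simp⟩
  obtain ⟨q, rfl⟩ := hdvd
  have hq : 0 < q := Nat.pos_of_mul_pos_left hn
  have : Nonempty (Fin (k * q)) := ⟨⟨0, hn⟩⟩
  subst hX
  have hm₀ : 0 < (k * q - 1).choose (k - 1) :=
    Nat.choose_pos (Nat.sub_le_sub_right (Nat.le_mul_of_pos_right k hq) 1)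
  obtain hm | hm : (k * q - 1).choose (k - 1) = 1 ∨ 2 ≤ (k * q - 1).choose (k - 1) := by omega
  · have hY' J (hJ : #J = Fintype.card (Fin k)) : (Y J).PosDef :=
      hY J (hJ.trans (Fintype.card_fin k))
    rw [hm]
    refine ⟨fun _ => matchingSum finProdFinEquiv.symm Y, fun _ => posDef_matchingSum _ hY', ?_, ?_⟩
    · rw [Fin.sum_univ_one, matchingSum,
        sum_card_eq_eq_sum_matchingBlock_of_choose_pred_eq_one hk hq hm fun J => embed J (Y J)]
    · rw [Fin.sum_univ_one, log_det_matchingSum _ hY',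
        sum_card_eq_eq_sum_matchingBlock_of_choose_pred_eq_one hk hq hm]
  · obtain ⟨Z, hZ, hsum, hlog⟩ := ((posDef_sum_embed hk hq hY).smul (inv_pos.mpr
      (Nat.cast_pos.mpr hm₀ : (0 : ℝ) < _))).exists_sum_eq_smul_sum_log_det_eq hm
      (sum_log_det_le_choose_mul_log_det hk hq hY)
    exact ⟨Z, hZ, by rw [hsum, smul_inv_smul₀ (Nat.cast_ne_zero.mpr hm₀.ne')], hlog⟩
end

section
/- Barrier comparison inequality: let k | n, let Y = {Y_J ≻ 0 : J ⊆ [n], |J| = k}, X = Σ_{|J|=k} (Y_J)^{→n}, and set c = C(n−1,k−1). Then −Σ_{|J|=k} log(det(Y_J)) ≥ −c·log(det(X)) + n·c·log(c). -/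
open Matrix Finset

/-!
For positive definite `A` and `Z` of size `d`, `log x ≤ x - 1` on the eigenvalues of
`√Z A √Z` gives `log det A + log det Z ≤ tr (Z A) - d`. Apply it to every `Y_J` and the principal
submatrix `W_J` of `W = c X⁻¹`: summed over `J`, the traces add up to `tr (W X) = c n`, which
cancels `∑ |J| = k C(n, k) = n c`, so
`∑ log det Y_J ≤ -∑ log det W_J = -n c log c - ∑ log det (X⁻¹)_J`.
Szász's inequality `∑_{|J| = k} log det M_J ≥ C(n-1, k-1) log det M`, applied to `M = X⁻¹`,
finishes the proof. It follows by downward induction on `k` (double counting the pairs `J ⊂ J'`)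
from its case `k = n - 1`, which is Hadamard's inequality for `M⁻¹` rewritten with Jacobi's
identity `det M_{[n] ∖ i} = det M · (M⁻¹)_{ii}`.
-/

theorem Finset.sum_univ_dite_mem {ι M : Type*} [Fintype ι] [DecidableEq ι] [AddCommMonoid M]
    (s : Finset ι) (f : (i : ι) → i ∈ s → M) :
    ∑ i, (if h : i ∈ s then f i h else 0) = ∑ i : s, f i i.2 :=
  (sum_attach_eq_sum_dite s fun i => f i i.2).symm

theorem Finset.exists_mem_powersetCard_univ_mem {α : Type*} [Fintype α] {k : ℕ} (hk : 0 < k)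
    (hkα : k ≤ Fintype.card α) (a : α) : ∃ t ∈ univ.powersetCard k, a ∈ t := by
  obtain ⟨t, hat, ht⟩ := exists_superset_card_eq (s := {a}) ((card_singleton a).trans_le hk) hkα
  exact ⟨t, mem_powersetCard_univ.2 ht, hat (mem_singleton_self a)⟩

theorem Finset.sum_powersetCard_succ_sum_erase {α M : Type*} [DecidableEq α] [AddCommMonoid M]
    (s : Finset α) (k : ℕ) (f : Finset α → M) :
    ∑ t ∈ s.powersetCard (k + 1), ∑ i ∈ t, f (t.erase i) =
      ∑ u ∈ s.powersetCard k, (#s - k) • f u := by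
  calc _ = ∑ u ∈ s.powersetCard k, ∑ _i ∈ s \ u, f u := by
        rw [sum_sigma', sum_sigma']
        refine sum_bij' (fun p _ => ⟨p.1.erase p.2, p.2⟩) (fun p _ => ⟨insert p.2 p.1, p.2⟩)
          ?_ ?_ ?_ ?_ fun _ _ => rfl
        · rintro ⟨t, i⟩ hp
          obtain ⟨ht, hi⟩ := mem_sigma.1 hp
          obtain ⟨hts, htk⟩ := mem_powersetCard.1 ht
          refine mem_sigma.2 ⟨mem_powersetCard.2 ⟨(erase_subset i t).trans hts, ?_⟩,
            mem_sdiff.2 ⟨hts hi, notMem_erase i t⟩⟩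
          rw [card_erase_of_mem hi, htk, Nat.add_sub_cancel]
        · rintro ⟨u, j⟩ hp
          obtain ⟨hu, hj⟩ := mem_sigma.1 hp
          obtain ⟨hus, huk⟩ := mem_powersetCard.1 hu
          obtain ⟨hjs, hju⟩ := mem_sdiff.1 hj
          refine mem_sigma.2 ⟨mem_powersetCard.2 ⟨insert_subset hjs hus, ?_⟩, mem_insert_self j u⟩
          rw [card_insert_of_notMem hju, huk]
        · rintro ⟨t, i⟩ hp
          simp only [insert_erase (mem_sigma.1 hp).2]
        · rintro ⟨u, j⟩ hp
          simp only [erase_insert (mem_sdiff.1 (mem_sigma.1 hp).2).2]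
    _ = _ := sum_congr rfl fun u hu => by
        rw [sum_const, card_sdiff_of_subset (mem_powersetCard.1 hu).1, (mem_powersetCard.1 hu).2]

namespace Matrix

variable {m : Type*}

abbrev principalSubmatrix {α : Type*} (M : Matrix m m α) (J : Finset m) : Matrix J J α :=
  M.submatrix (↑) (↑)

theorem det_submatrix_eq_of_equiv {ι κ R : Type*} [Fintype ι] [DecidableEq ι] [Fintype κ]
    [DecidableEq κ] [CommRing R] (M : Matrix m m R) {f : ι → m} {g : κ → m} (e : ι ≃ κ)
    (h : ∀ i, g (e i) = f i) : (M.submatrix f f).det = (M.submatrix g g).det := by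
  rw [← det_submatrix_equiv_self e, submatrix_submatrix, show g ∘ e = f from funext h]

section

variable [Fintype m] [DecidableEq m]

/-- Row `i` of `M.updateRow i (Pi.single i 1)`, whose determinant is `M.adjugate i i`, is the unit
vector `eᵢ`, so that matrix is block triangular. -/
theorem det_submatrix_ne_eq_adjugate {R : Type*} [CommRing R] (M : Matrix m m R) (i : m) :
    (M.submatrix (Subtype.val : {j // j ≠ i} → m) Subtype.val).det = M.adjugate i i := by
  set N := M.updateRow i (Pi.single i 1)
  have hblock : N.toSquareBlockProp (· ≠ i) = M.submatrix Subtype.val Subtype.val := by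
    ext a b
    exact congrFun (updateRow_ne (M := M) (b := Pi.single i 1) a.2) b
  rw [adjugate_apply, N.twoBlockTriangular_det (· ≠ i), hblock,
    equiv_block_det N (q := (id · = i)) (by simp)]
  · change _ = _ * (N.toSquareBlock id i).det
    rw [det_toSquareBlock_id]
    simp [N]
  · intro r hr c hc
    simp_all [N]

theorem det_submatrix_ne_eq_det_mul_inv {K : Type*} [Field K] (M : Matrix m m K)
    (hM : M.det ≠ 0) (i : m) :
    (M.submatrix (Subtype.val : {j // j ≠ i} → m) Subtype.val).det = M.det * M⁻¹ i i := by
  rw [det_submatrix_ne_eq_adjugate, inv_def, smul_apply, smul_eq_mul, Ring.inverse_eq_inv',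
    ← mul_assoc, mul_inv_cancel₀ hM, one_mul]

theorem PosDef.log_det_le_trace_sub_card_s9 {B : Matrix m m ℝ} (hB : B.PosDef) :
    Real.log B.det ≤ B.trace - Fintype.card m := by
  have hpos := hB.eigenvalues_pos
  rw [hB.isHermitian.det_eq_prod_eigenvalues, hB.isHermitian.trace_eq_sum_eigenvalues]
  simp only [RCLike.ofReal_real_eq_id, id]
  rw [Real.log_prod fun i _ => (hpos i).ne', ← card_univ, card_eq_sum_ones,
    Nat.cast_sum, Nat.cast_one, ← sum_sub_distrib]
  exact sum_le_sum fun i _ => Real.log_le_sub_one_of_pos (hpos i)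

open scoped MatrixOrder in
theorem PosDef.log_det_add_log_det_le_trace_mul {A Z : Matrix m m ℝ} (hA : A.PosDef)
    (hZ : Z.PosDef) : Real.log A.det + Real.log Z.det ≤ (Z * A).trace - Fintype.card m := by
  set S := CFC.sqrt Z
  have hS : Sᴴ = S := (CFC.sqrt_nonneg Z).posSemidef.isHermitian
  have hSS : S * S = Z := CFC.sqrt_mul_sqrt_self Z hZ.posSemidef.nonneg
  have hdet : S.det * S.det = Z.det := by rw [← det_mul, hSS]
  have hSunit : IsUnit S := (isUnit_iff_isUnit_det S).2 <| isUnit_iff_ne_zero.2 fun h => by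
    simp [h, hZ.det_pos.ne] at hdet
  have hB := hA.conjTranspose_mul_mul_same (mulVec_injective_of_isUnit hSunit)
  rw [hS] at hB
  have hdetB : (S * A * S).det = A.det * Z.det := by
    rw [det_mul, det_mul, mul_right_comm, hdet, mul_comm]
  have htr : (S * A * S).trace = (Z * A).trace := by
    rw [mul_assoc, trace_mul_comm, mul_assoc, hSS, trace_mul_comm]
  simpa only [hdetB, htr, Real.log_mul hA.det_pos.ne' hZ.det_pos.ne'] using
    hB.log_det_le_trace_sub_card_s9

theorem PosDef.log_det_le_sum_log_diag {M : Matrix m m ℝ} (hM : M.PosDef) :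
    Real.log M.det ≤ ∑ i, Real.log (M i i) := by
  have hd : ∀ i, 0 < M i i := fun i => hM.diag_pos
  have key := hM.log_det_add_log_det_le_trace_mul
    (Z := diagonal fun i => (M i i)⁻¹) (posDef_diagonal_iff.2 fun i => inv_pos.2 (hd i))
  have htr : (diagonal (fun i => (M i i)⁻¹) * M).trace = Fintype.card m := by
    simp [trace, diagonal_mul, inv_mul_cancel₀ (hd _).ne']
  rw [htr, det_diagonal, Real.log_prod fun i _ => (inv_pos.2 (hd i)).ne'] at key
  simp only [Real.log_inv, sum_neg_distrib] at key
  linarith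

theorem PosDef.card_sub_one_mul_log_det_le_sum_log_det_submatrix_ne {M : Matrix m m ℝ}
    (hM : M.PosDef) :
    ((Fintype.card m : ℝ) - 1) * Real.log M.det ≤
      ∑ i, Real.log (M.submatrix (Subtype.val : {j // j ≠ i} → m) Subtype.val).det := by
  have hinv := hM.inv
  have hterm : ∀ i, Real.log (M.submatrix (Subtype.val : {j // j ≠ i} → m) Subtype.val).det =
      Real.log M.det + Real.log (M⁻¹ i i) := fun i => by
    rw [det_submatrix_ne_eq_det_mul_inv M hM.det_pos.ne',
      Real.log_mul hM.det_pos.ne' hinv.diag_pos.ne']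
  have hadamard := hinv.log_det_le_sum_log_diag
  rw [det_nonsing_inv, Ring.inverse_eq_inv', Real.log_inv] at hadamard
  simp only [hterm, sum_add_distrib, sum_const, card_univ, nsmul_eq_mul]
  linarith

end

section

variable [DecidableEq m]

theorem PosDef.card_sub_one_mul_log_det_principalSubmatrix_le_sum_erase {M : Matrix m m ℝ}
    (hM : M.PosDef) (J : Finset m) :
    ((#J : ℝ) - 1) * Real.log (M.principalSubmatrix J).det ≤
      ∑ i ∈ J, Real.log (M.principalSubmatrix (J.erase i)).det := by
  have key := card_sub_one_mul_log_det_le_sum_log_det_submatrix_ne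
    (hM.submatrix (Subtype.val_injective (p := (· ∈ J))))
  rw [Fintype.card_coe] at key
  refine key.trans_eq ?_
  rw [← sum_coe_sort J]
  refine sum_congr rfl fun i _ => congrArg Real.log ?_
  rw [submatrix_submatrix]
  exact det_submatrix_eq_of_equiv M ((Equiv.subtypeSubtypeEquivSubtypeExists _ _).trans
    (Equiv.subtypeEquivRight fun x => by simp [Subtype.ext_iff, and_comm])) fun _ => rfl

theorem PosDef.log_det_principalSubmatrix_smul {N : Matrix m m ℝ} (hN : N.PosDef) {c : ℝ}
    (hc : 0 < c) (J : Finset m) :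
    Real.log ((c • N).principalSubmatrix J).det =
      #J * Real.log c + Real.log (N.principalSubmatrix J).det := by
  change Real.log (c • N.principalSubmatrix J).det = _
  rw [det_smul, Fintype.card_coe,
    Real.log_mul (by positivity) (hN.submatrix Subtype.val_injective).det_pos.ne', Real.log_pow]

end

section

variable [Fintype m] [DecidableEq m]

theorem PosDef.mul_sum_log_det_powersetCard_succ_le {M : Matrix m m ℝ} (hM : M.PosDef) (k : ℕ) :
    (k : ℝ) * ∑ J ∈ univ.powersetCard (k + 1), Real.log (M.principalSubmatrix J).det ≤
      ((Fintype.card m - k : ℕ) : ℝ) *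
        ∑ J ∈ univ.powersetCard k, Real.log (M.principalSubmatrix J).det := by
  rw [mul_sum, mul_sum]
  calc ∑ J ∈ univ.powersetCard (k + 1), (k : ℝ) * Real.log (M.principalSubmatrix J).det
      ≤ ∑ J ∈ univ.powersetCard (k + 1), ∑ i ∈ J,
          Real.log (M.principalSubmatrix (J.erase i)).det := by
        refine sum_le_sum fun J hJ => ?_
        have := hM.card_sub_one_mul_log_det_principalSubmatrix_le_sum_erase J
        rwa [mem_powersetCard_univ.1 hJ, Nat.cast_add_one, add_sub_cancel_right] at this
    _ = _ := by
        rw [sum_powersetCard_succ_sum_erase univ k fun J => Real.log (M.principalSubmatrix J).det,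
          card_univ]
        simp only [nsmul_eq_mul]

theorem PosDef.choose_mul_log_det_le_sum_log_det_powersetCard {M : Matrix m m ℝ}
    (hM : M.PosDef) {k : ℕ} (hk : k < Fintype.card m) :
    ((Fintype.card m - 1).choose k : ℝ) * Real.log M.det ≤
      ∑ J ∈ univ.powersetCard (k + 1), Real.log (M.principalSubmatrix J).det := by
  obtain ⟨N, hN⟩ : ∃ N, Fintype.card m = N + 1 := Nat.exists_eq_add_one_of_ne_zero (by omega)
  have hkN : k ≤ N := by omega
  rw [hN, Nat.add_sub_cancel]
  refine Nat.decreasingInduction (motive := fun k _ => (N.choose k : ℝ) * Real.log M.det ≤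
    ∑ J ∈ univ.powersetCard (k + 1), Real.log (M.principalSubmatrix J).det) ?_ ?_ hkN
  · intro k hk ih
    have hstep := hM.mul_sum_log_det_powersetCard_succ_le (k + 1)
    rw [hN, Nat.add_sub_add_right] at hstep
    have hchoose : ((N - k : ℕ) : ℝ) * N.choose k = (k + 1) * N.choose (k + 1) := by
      rw [mul_comm, mul_comm ((k : ℝ) + 1)]
      exact_mod_cast (Nat.choose_succ_right_eq N k).symm
    refine le_of_mul_le_mul_left ?_ (Nat.cast_pos.2 (Nat.sub_pos_of_lt hk))
    calc ((N - k : ℕ) : ℝ) * ((N.choose k : ℝ) * Real.log M.det)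
        = (k + 1) * ((N.choose (k + 1) : ℝ) * Real.log M.det) := by
          rw [← mul_assoc, hchoose, mul_assoc]
      _ ≤ (k + 1) * ∑ J ∈ univ.powersetCard (k + 1 + 1), Real.log (M.principalSubmatrix J).det :=
          mul_le_mul_of_nonneg_left ih (by positivity)
      _ ≤ _ := by exact_mod_cast hstep
  · have huniv : (M.principalSubmatrix univ).det = M.det := by
      rw [principalSubmatrix, det_submatrix_eq_of_equiv M (Equiv.subtypeUnivEquiv mem_univ)
        (f := Subtype.val) (g := id) fun _ => rfl, submatrix_id_id]
    rw [Nat.choose_self, Nat.cast_one, one_mul, ← hN, ← card_univ, powersetCard_self,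
      sum_singleton, huniv]

end

section

variable {n : ℕ}

theorem IsHermitian.embed {J : Finset (Fin n)} {S : Matrix J J ℝ} (hS : S.IsHermitian) :
    (embed J S).IsHermitian := by
  ext i j
  simp only [conjTranspose_apply, Matrix.embed, star_trivial]
  split_ifs <;> first | rfl | exact hS.apply _ _

theorem dotProduct_embed_mulVec (J : Finset (Fin n)) (S : Matrix J J ℝ) (x : Fin n → ℝ) :
    x ⬝ᵥ embed J S *ᵥ x = (fun i : J => x i) ⬝ᵥ S *ᵥ (fun i : J => x i) := by
  simp only [dotProduct, mulVec, embed, dite_mul, zero_mul, mul_dite, mul_zero, sum_dite_irrel,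
    sum_const_zero, sum_univ_dite_mem]

theorem trace_mul_embed (W : Matrix (Fin n) (Fin n) ℝ) (J : Finset (Fin n)) (S : Matrix J J ℝ) :
    (W * embed J S).trace = (W.principalSubmatrix J * S).trace := by
  simp only [trace, Matrix.diag, mul_apply, embed, mul_dite, mul_zero, sum_dite_irrel,
    sum_const_zero, sum_univ_dite_mem, submatrix_apply]

theorem posDef_sum_embed (𝒥 : Finset (Finset (Fin n))) (h𝒥 : ∀ i, ∃ J ∈ 𝒥, i ∈ J)
    {Y : (J : Finset (Fin n)) → Matrix J J ℝ} (hY : ∀ J ∈ 𝒥, (Y J).PosDef) :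
    (∑ J ∈ 𝒥, embed J (Y J)).PosDef := by
  refine .of_dotProduct_mulVec_pos ((conjTranspose_sum _ _).trans <|
    sum_congr rfl fun J hJ => (hY J hJ).isHermitian.embed) fun x hx => ?_
  obtain ⟨i, hi⟩ := Function.ne_iff.1 hx
  obtain ⟨J₀, hJ₀, hiJ₀⟩ := h𝒥 i
  simp only [star_trivial, sum_mulVec, dotProduct_sum, dotProduct_embed_mulVec]
  refine sum_pos' (fun J hJ => ?_) ⟨J₀, hJ₀, (hY J₀ hJ₀).dotProduct_mulVec_pos fun h => ?_⟩
  · simpa using (hY J hJ).posSemidef.dotProduct_mulVec_nonneg fun j : J => x j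
  · exact hi (congrFun h ⟨i, hiJ₀⟩)

theorem sum_log_det_add_sum_log_det_principalSubmatrix_le (𝒥 : Finset (Finset (Fin n)))
    {Y : (J : Finset (Fin n)) → Matrix J J ℝ} (hY : ∀ J ∈ 𝒥, (Y J).PosDef)
    {W : Matrix (Fin n) (Fin n) ℝ} (hW : W.PosDef) :
    ∑ J ∈ 𝒥, Real.log (Y J).det + ∑ J ∈ 𝒥, Real.log (W.principalSubmatrix J).det ≤
      (W * ∑ J ∈ 𝒥, embed J (Y J)).trace - ∑ J ∈ 𝒥, (#J : ℝ) := by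
  rw [← sum_add_distrib, mul_sum, trace_sum, ← sum_sub_distrib]
  refine sum_le_sum fun J hJ => ?_
  have := (hY J hJ).log_det_add_log_det_le_trace_mul (hW.submatrix Subtype.val_injective)
  rwa [Fintype.card_coe, ← trace_mul_embed] at this

end

end Matrix

/-- barrier comparison inequality,
`f^{FW(k)}(Y) ≥ c·f^{SDP}(Ψ(Y)) + n·c·log c` with `c = C(n−1,k−1)`. -/
theorem barrier_comparison {n k : ℕ} (hk : 0 < k) (hdvd : k ∣ n)
    (Y : (J : Finset (Fin n)) → Matrix ↥J ↥J ℝ)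
    (hY : ∀ J : Finset (Fin n), J.card = k → (Y J).PosDef)
    (X : Matrix (Fin n) (Fin n) ℝ)
    (hX : X = ∑ J ∈ Finset.univ.filter (fun J : Finset (Fin n) => J.card = k),
            Matrix.embed J (Y J)) :
    -(Nat.choose (n - 1) (k - 1) : ℝ) * Real.log X.det +
        (n : ℝ) * (Nat.choose (n - 1) (k - 1) : ℝ) *
          Real.log (Nat.choose (n - 1) (k - 1) : ℝ) ≤
      -∑ J ∈ Finset.univ.filter (fun J : Finset (Fin n) => J.card = k),
          Real.log (Y J).det := by
  rcases Nat.eq_zero_or_pos n with rfl | hn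
  · simp -- all matrices are indexed by empty types, so every determinant is `1`
  obtain ⟨n, rfl⟩ := Nat.exists_eq_add_one_of_ne_zero hn.ne'
  obtain ⟨k, rfl⟩ := Nat.exists_eq_add_one_of_ne_zero hk.ne'
  have hkn : k + 1 ≤ n + 1 := Nat.le_of_dvd hn hdvd
  simp only [univ_filter_card_eq, Nat.add_sub_cancel] at hX ⊢
  have hY' : ∀ J ∈ univ.powersetCard (k + 1), (Y J).PosDef :=
    fun J hJ => hY J (mem_powersetCard_univ.1 hJ)
  have hXpd : X.PosDef := hX ▸ posDef_sum_embed _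
    (exists_mem_powersetCard_univ_mem k.succ_pos (by simpa using hkn)) hY'
  set c : ℝ := (n.choose k : ℝ) with hc_def
  have hc : 0 < c := Nat.cast_pos.2 (Nat.choose_pos (by omega))
  have hdual := sum_log_det_add_sum_log_det_principalSubmatrix_le _ hY' (hXpd.inv.smul hc)
  have hszasz := hXpd.inv.choose_mul_log_det_le_sum_log_det_powersetCard (k := k)
    (by simpa using hkn)
  have hcard : ∑ J ∈ (univ : Finset (Fin (n + 1))).powersetCard (k + 1), (#J : ℝ) =
      (n + 1) * c := by
    rw [sum_congr rfl fun J hJ => congrArg Nat.cast (mem_powersetCard_univ.1 hJ), sum_const,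
      card_powersetCard, card_univ, Fintype.card_fin, nsmul_eq_mul, hc_def]
    exact_mod_cast (Nat.add_one_mul_choose_eq n k).symm
  rw [← hX, smul_mul, nonsing_inv_mul X hXpd.det_pos.ne'.isUnit, trace_smul, trace_one, hcard,
    sum_congr rfl fun J _ => hXpd.inv.log_det_principalSubmatrix_smul hc J, sum_add_distrib,
    ← sum_mul, hcard] at hdual
  rw [Fintype.card_fin, Nat.add_sub_cancel, det_nonsing_inv, Ring.inverse_eq_inv',
    Real.log_inv] at hszasz
  simp only [Fintype.card_fin, smul_eq_mul, Nat.cast_add, Nat.cast_one] at hdual ⊢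
  linarith
end

section
/- Norm contraction of the splitting operator: for any symmetric n×n matrix X, define Ψ†(X) to be the collection over k-subsets J of [n] of the k×k matrices ((1/C(n−1,k−1))·I + (1/C(n−2,k−2))·(ee^T − I)) ∘ X_{J,J} (Hadamard product). Then the norm Σ_{|J|=k} ‖(Ψ†(X))_J‖_F^2 ≤ ‖X‖_F^2, i.e., ‖Ψ†(X)‖_{(n,k)} ≤ ‖X‖_F. -/
/-!
Regroup the sum over blocks by matrix entries: the entry `(i, j)` lies in the block of `J`
exactly when `{i, j} ⊆ J`, and `J ↦ J \ {i, j}` shows that at most `C(n - #{i,j}, k - #{i,j})`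
of the `k`-subsets do so, which is `C(n-1,k-1)` on the diagonal and `C(n-2,k-2)` off it.
So each `X i j ^ 2` gets the weight `N * c⁻²` with `N ≤ c`, which is at most `1`.
-/

open Matrix Finset

lemma card_superset_le_choose {α : Type*} [Fintype α] [DecidableEq α] (k : ℕ) (s : Finset α) :
    #{J ∈ univ.filter (·.card = k) | s ⊆ J} ≤ (Fintype.card α - #s).choose (k - #s) := by
  rw [← card_univ, ← card_sdiff_of_subset (subset_univ s), ← card_powersetCard]
  refine card_le_card_of_injOn (· \ s) (fun J hJ => ?_) (fun J hJ J' hJ' h => ?_)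
  · simp only [mem_coe, mem_filter, mem_univ, true_and] at hJ
    rw [mem_coe, mem_powersetCard, card_sdiff_of_subset hJ.2, hJ.1]
    exact ⟨sdiff_subset_sdiff (subset_univ J) le_rfl, rfl⟩
  · simp only [mem_coe, mem_filter, mem_univ, true_and] at hJ hJ'
    rw [← sdiff_union_of_subset hJ.2, ← sdiff_union_of_subset hJ'.2]
    exact congrArg (· ∪ s) h

lemma sum_subtype_sum_subtype_eq_sum_ite {α M : Type*} [Fintype α] [DecidableEq α]
    [AddCommMonoid M] (J : Finset α) (f : α → α → M) :
    ∑ a : J, ∑ b : J, f a b = ∑ i, ∑ j, if i ∈ J ∧ j ∈ J then f i j else 0 := by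
  simp only [ite_and, sum_ite_irrel, sum_const_zero, sum_ite_mem, univ_inter, sum_coe_sort]
  exact sum_coe_sort J (fun i => ∑ j ∈ J, f i j)

lemma sum_sum_subtype_sum_subtype_eq_sum_card_nsmul {α M : Type*} [Fintype α] [DecidableEq α]
    [AddCommMonoid M] (S : Finset (Finset α)) (f : α → α → M) :
    ∑ J ∈ S, ∑ a : J, ∑ b : J, f a b =
      ∑ i, ∑ j, #{J ∈ S | i ∈ J ∧ j ∈ J} • f i j := by
  simp only [sum_subtype_sum_subtype_eq_sum_ite, ← sum_const, sum_filter]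
  rw [sum_comm]
  exact sum_congr rfl fun i _ => sum_comm

lemma natCast_mul_sq_inv_mul_le_sq {m c : ℕ} (h : m ≤ c) (x : ℝ) :
    m * ((c : ℝ)⁻¹ * x) ^ 2 ≤ x ^ 2 := by
  rcases Nat.eq_zero_or_pos c with rfl | hc
  · simp [Nat.le_zero.mp h, sq_nonneg]
  calc (m : ℝ) * ((c : ℝ)⁻¹ * x) ^ 2 ≤ c * ((c : ℝ)⁻¹ * x) ^ 2 := by gcongr
    _ = (c : ℝ)⁻¹ * x ^ 2 := by field_simp
    _ ≤ x ^ 2 :=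
      mul_le_of_le_one_left (sq_nonneg x) (inv_le_one_of_one_le₀ (by exact_mod_cast hc))

theorem splitting_operator_norm_contraction_general {n k : ℕ}
    (X : Matrix (Fin n) (Fin n) ℝ) :
    ∑ J ∈ Finset.univ.filter (fun J : Finset (Fin n) => J.card = k),
      ∑ a : ↥J, ∑ b : ↥J,
        ((if a = b then ((Nat.choose (n - 1) (k - 1) : ℝ))⁻¹
            else ((Nat.choose (n - 2) (k - 2) : ℝ))⁻¹) * X a.1 b.1) ^ 2
      ≤ ∑ i, ∑ j, (X i j) ^ 2 := by
  let g : Fin n → Fin n → ℝ := fun i j =>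
    ((if i = j then ((n - 1).choose (k - 1) : ℝ)⁻¹ else ((n - 2).choose (k - 2) : ℝ)⁻¹)
      * X i j) ^ 2
  simp only [Subtype.ext_iff]
  change ∑ J ∈ univ.filter (fun J : Finset (Fin n) => J.card = k),
    ∑ a : J, ∑ b : J, g a b ≤ _
  rw [sum_sum_subtype_sum_subtype_eq_sum_card_nsmul]
  refine sum_le_sum fun i _ => sum_le_sum fun j _ => ?_
  have hcard := card_superset_le_choose k {i, j}
  simp only [insert_subset_iff, singleton_subset_iff, Fintype.card_fin] at hcard
  rw [nsmul_eq_mul]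
  by_cases hij : i = j
  · subst hij
    simp only [g, if_pos, and_self, pair_eq_singleton, card_singleton] at hcard ⊢
    exact natCast_mul_sq_inv_mul_le_sq hcard _
  · rw [card_pair hij] at hcard
    simp only [g, if_neg hij]
    exact natCast_mul_sq_inv_mul_le_sq hcard _

/-- norm contraction of the splitting operator `Ψ†`:
`‖Ψ†(X)‖_{(n,k)} ≤ ‖X‖_F` (stated with squared norms). -/
theorem splitting_operator_norm_contraction {n k : ℕ} (hk : 2 ≤ k) (hkn : k ≤ n)
    (X : Matrix (Fin n) (Fin n) ℝ) (hX : X.IsSymm) :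
    ∑ J ∈ Finset.univ.filter (fun J : Finset (Fin n) => J.card = k),
      ∑ a : ↥J, ∑ b : ↥J,
        ((if a = b then ((Nat.choose (n - 1) (k - 1) : ℝ))⁻¹
            else ((Nat.choose (n - 2) (k - 2) : ℝ))⁻¹) * X a.1 b.1) ^ 2
      ≤ ∑ i, ∑ j, (X i j) ^ 2 :=
  splitting_operator_norm_contraction_general X
end

section
/- Monotone decrease of the iterative relaxation scheme: suppose X_ℓ is an optimal solution of the relaxed program v_ℓ = min{⟨A_0^{(ℓ)}, X⟩ : 𝒜^{(ℓ)}(X) = b, X ∈ K} where K ⊆ S^n_+ is a cone containing the identity matrix, and set A_i^{(ℓ+1)} = (X*)^{1/2} A_i^{(ℓ)} (X*)^{1/2} for an optimal solution X* of the ℓ-th program. Then the optimal value of the (ℓ+1)-st program satisfies v_{ℓ+1} ≤ v_ℓ, and v_ℓ ≥ v*_{SDP} for all ℓ, where v*_{SDP} is the optimum of the SDP obtained by replacing K with S^n_+. -/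
open Matrix Finset

/-- The positive semidefinite square root of a positive semidefinite matrix
(Mathlib's former `Matrix.PosSemidef.sqrt`, removed since; restated with its old definition). -/
noncomputable def Matrix.PosSemidef.sqrt {n : Type*} [Fintype n] [DecidableEq n] {𝕜 : Type*}
    [RCLike 𝕜] [PartialOrder 𝕜] {A : Matrix n n 𝕜} (hA : A.PosSemidef) : Matrix n n 𝕜 :=
  hA.1.eigenvectorUnitary.1 * diagonal ((↑) ∘ (√·) ∘ hA.1.eigenvalues) *
  (star hA.1.eigenvectorUnitary : Matrix n n 𝕜)

namespace Matrix.PosSemidef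

open scoped ComplexOrder

variable {ι 𝕜 : Type*} [Fintype ι] [DecidableEq ι] [RCLike 𝕜]
  {A : Matrix ι ι 𝕜}

theorem sqrt_mul_self (hA : A.PosSemidef) : hA.sqrt * hA.sqrt = A := by
  set U : Matrix ι ι 𝕜 := hA.1.eigenvectorUnitary.1
  have hU : star U * U = 1 := hA.1.eigenvectorUnitary.2.1
  conv_rhs => rw [hA.1.spectral_theorem, Unitary.conjStarAlgAut_apply]
  simp only [sqrt, Matrix.mul_assoc]
  rw [← Matrix.mul_assoc (star U), hU, Matrix.one_mul, ← Matrix.mul_assoc (diagonal _),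
    diagonal_mul_diagonal]
  congr 3
  funext i
  simp only [Function.comp_apply, ← RCLike.ofReal_mul,
    Real.mul_self_sqrt (hA.eigenvalues_nonneg i)]

theorem trace_sqrt_mul_mul_sqrt (hA : A.PosSemidef) (B : Matrix ι ι 𝕜) :
    (hA.sqrt * B * hA.sqrt).trace = (B * A).trace := by
  rw [trace_mul_cycle, sqrt_mul_self, trace_mul_comm]

end Matrix.PosSemidef

theorem iterative_scheme_monotone_general {n m : ℕ} (K : Set (Matrix (Fin n) (Fin n) ℝ))
    (hK : ∀ X ∈ K, X.PosSemidef) (hIK : (1 : Matrix (Fin n) (Fin n) ℝ) ∈ K)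
    (A : Fin m → Matrix (Fin n) (Fin n) ℝ) (A0 : Matrix (Fin n) (Fin n) ℝ)
    (b : Fin m → ℝ) (Xstar : Matrix (Fin n) (Fin n) ℝ)
    (hXK : Xstar ∈ K) (hfeas : ∀ i, (A i * Xstar).trace = b i)
    (vl vnext vSDP : ℝ)
    (hvl : (A0 * Xstar).trace = vl)
    (hnext : IsGLB {v | ∃ X ∈ K,
        (∀ i, ((hK Xstar hXK).sqrt * A i * (hK Xstar hXK).sqrt * X).trace = b i) ∧
        ((hK Xstar hXK).sqrt * A0 * (hK Xstar hXK).sqrt * X).trace = v} vnext)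
    (hSDP : IsGLB {v | ∃ X : Matrix (Fin n) (Fin n) ℝ, X.PosSemidef ∧
        (∀ i, (A i * X).trace = b i) ∧ (A0 * X).trace = v} vSDP) :
    vnext ≤ vl ∧ vSDP ≤ vl := by
  -- `I` is feasible for the rescaled program, with the same objective value as `X*`.
  have rescaled_trace (B : Matrix (Fin n) (Fin n) ℝ) :
      ((hK Xstar hXK).sqrt * B * (hK Xstar hXK).sqrt * 1).trace = (B * Xstar).trace := by
    rw [Matrix.mul_one, (hK Xstar hXK).trace_sqrt_mul_mul_sqrt]
  refine ⟨hnext.1 ⟨1, hIK, fun i => ?_, ?_⟩, hSDP.1 ⟨Xstar, hK Xstar hXK, hfeas, hvl⟩⟩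
  · rw [rescaled_trace, hfeas]
  · rw [rescaled_trace, hvl]

/-- one step of the iterative relaxation scheme. If `X*` is an
optimal solution of the relaxed program over a cone `K ⊆ S^n_+` containing `I`,
with optimal value `vℓ`, then after rescaling the data by `(X*)^{1/2}` the new
optimal value satisfies `vnext ≤ vℓ`, and `vℓ ≥ v_SDP`. -/
theorem iterative_scheme_monotone {n m : ℕ} (K : Set (Matrix (Fin n) (Fin n) ℝ))
    (hK : ∀ X ∈ K, X.PosSemidef) (hIK : (1 : Matrix (Fin n) (Fin n) ℝ) ∈ K)
    (A : Fin m → Matrix (Fin n) (Fin n) ℝ) (A0 : Matrix (Fin n) (Fin n) ℝ)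
    (b : Fin m → ℝ) (Xstar : Matrix (Fin n) (Fin n) ℝ)
    (hXK : Xstar ∈ K) (hfeas : ∀ i, (A i * Xstar).trace = b i)
    (vl vnext vSDP : ℝ)
    (hopt : IsLeast {v | ∃ X ∈ K, (∀ i, (A i * X).trace = b i) ∧ (A0 * X).trace = v} vl)
    (hvl : (A0 * Xstar).trace = vl)
    (hnext : IsGLB {v | ∃ X ∈ K,
        (∀ i, ((hK Xstar hXK).sqrt * A i * (hK Xstar hXK).sqrt * X).trace = b i) ∧
        ((hK Xstar hXK).sqrt * A0 * (hK Xstar hXK).sqrt * X).trace = v} vnext)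
    (hSDP : IsGLB {v | ∃ X : Matrix (Fin n) (Fin n) ℝ, X.PosSemidef ∧
        (∀ i, (A i * X).trace = b i) ∧ (A0 * X).trace = v} vSDP) :
    vnext ≤ vl ∧ vSDP ≤ vl :=
  iterative_scheme_monotone_general K hK hIK A A0 b Xstar hXK hfeas vl vnext vSDP hvl hnext hSDP
end

section
/- Baranyai's theorem: if k divides n, then the edge set of the complete k-uniform hypergraph on n vertices (i.e., all k-element subsets of [n]) can be partitioned into C(n−1,k−1) classes, each of which is a perfect matching (a collection of n/k pairwise disjoint k-subsets covering [n]). -/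
open Matrix Finset

/-!
Baranyai's argument: place the points one at a time. After the points of `R` are placed, each
of the `C(n-1, k-1)` rows is an ordered partition of `R` into `m = n/k` cells of size at most `k`
(empty cells allowed), and every `A ⊆ R` with `|A| ≤ k` occurs as a cell exactly `C(n-|R|, k-|A|)`
times, which is the number of `k`-sets whose trace on `R` is `A`. To place a new point one cell
per row receives it, and the invariant survives iff each `A` is chosen exactly
`C(n-|R|-1, k-|A|-1)` times. Choosing every cell `A` with weight `(k-|A|)/(n-|R|)` is a
fractional solution (the weights in a row sum to `1`), so Hall's condition holds for rows versus
that many copies of each `A`, and Hall's theorem gives an integral choice. When `R` is everything,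
all cells have size `k` and every `k`-set occurs exactly once.
-/

theorem Finset.exists_card_fiber_eq_of_forall_card_le_sum {ι β : Type*} [Fintype ι]
    [DecidableEq β] (t : ι → Finset β) (d : β → ℕ) (B : Finset β) (htB : ∀ i, t i ⊆ B)
    (hB : ∑ b ∈ B, d b = Fintype.card ι)
    (hall : ∀ S : Finset ι, #S ≤ ∑ b ∈ S.biUnion t, d b) :
    ∃ c : ι → β, (∀ i, c i ∈ t i) ∧ ∀ b ∈ B, #{i | c i = b} = d b := by
  -- Hall's theorem, applied with `d b` copies of each option `b`
  let slots : ι → Finset (Σ _ : β, ℕ) := fun i => (t i).sigma fun b => range (d b)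
  have hslots (S : Finset ι) : #S ≤ #(S.biUnion slots) := by
    have : S.biUnion slots = (S.biUnion t).sigma fun b => range (d b) := by
      ext ⟨b, r⟩
      simp only [slots, mem_biUnion, mem_sigma, mem_range]
      tauto
    simpa [this, card_sigma] using hall S
  obtain ⟨g, hg_inj, hg⟩ := (all_card_le_biUnion_card_iff_exists_injective slots).1 hslots
  have hgt (i : ι) : (g i).1 ∈ t i ∧ (g i).2 < d (g i).1 := by simpa [slots] using hg i
  have hle : ∀ b ∈ B, #{i | (g i).1 = b} ≤ d b := fun b _ => by
    simpa using card_le_card_of_injOn (t := range (d b)) (fun i => (g i).2)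
      (fun i hi => by
        simp only [coe_filter, Set.mem_ofPred_eq] at hi
        simpa [← hi.2] using (hgt i).2)
      (fun i hi i' hi' h => by
        simp only [coe_filter, Set.mem_ofPred_eq] at hi hi'
        exact hg_inj (Sigma.ext (hi.2.trans hi'.2.symm) (heq_of_eq h)))
  have hsum : ∑ b ∈ B, #{i | (g i).1 = b} = ∑ b ∈ B, d b := by
    rw [hB, ← card_univ, card_eq_sum_card_fiberwise fun i _ => htB i (hgt i).1]
  exact ⟨fun i => (g i).1, fun i => (hgt i).1, (sum_eq_sum_iff_of_le hle).1 hsum⟩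

theorem Finset.card_filter_prod_eq_add {ι κ : Type*} [Fintype ι] [Fintype κ] [DecidableEq κ]
    (s : ι → κ) (P : ι × κ → Prop) [DecidablePred P] :
    #{p | P p} = #{i | P (i, s i)} + #{p : ι × κ | p.2 ≠ s p.1 ∧ P p} := by
  rw [← card_filter_add_card_filter_not (fun p : ι × κ => p.2 = s p.1), filter_filter,
    filter_filter]
  congr 1
  · refine card_nbij' Prod.fst (fun i => (i, s i)) ?_ (fun i hi => ?_) ?_ (fun i _ => rfl)
    · rintro ⟨i, j⟩ hp
      obtain ⟨hP, rfl⟩ : P (i, j) ∧ j = s i := by simpa using hp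
      simpa using hP
    · simp_all
    · rintro ⟨i, j⟩ hp
      simp_all
  · congr 1
    exact filter_congr fun p _ => and_comm

namespace Baranyai

/-- With `N = n - |R|`, the number of rows that must put the new point into a cell `A`
with `|A| = a`. -/
def demand (N k a : ℕ) : ℕ := if a < k then (N - 1).choose (k - a - 1) else 0

lemma choose_mul_eq_demand_mul (N k a : ℕ) :
    N.choose (k - a) * (k - a) = demand N k a * N := by
  unfold demand
  split_ifs with h
  · obtain ⟨r, hr⟩ : ∃ r, k - a = r + 1 := ⟨k - a - 1, by omega⟩
    rcases N with _ | N
    · simp [hr]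
    · rw [show k - a - 1 = r by omega, hr, ← Nat.add_one_mul_choose_eq, Nat.add_sub_cancel,
        mul_comm]
  · simp [show k - a = 0 by omega]

lemma choose_eq_demand_add {N : ℕ} (hN : 0 < N) (k a : ℕ) :
    N.choose (k - a) = demand N k a + (N - 1).choose (k - a) := by
  obtain ⟨N, rfl⟩ := Nat.exists_eq_add_one_of_ne_zero hN.ne'
  unfold demand
  split_ifs with h
  · obtain ⟨r, hr⟩ : ∃ r, k - a = r + 1 := ⟨k - a - 1, by omega⟩
    rw [show k - a - 1 = r by omega, hr, Nat.choose_succ_succ', Nat.add_sub_cancel]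
  · simp [show k - a = 0 by omega]

lemma sum_powerset_demand {α : Type*} {n k : ℕ} (hk : 0 < k) (R : Finset α) (hR : #R < n) :
    ∑ A ∈ R.powerset, demand (n - #R) k #A = (n - 1).choose (k - 1) := by
  set ℓ := #R
  let g : ℕ → ℕ := fun j => ℓ.choose j * demand (n - ℓ) k j
  have hg_of_le {j : ℕ} (hj : ℓ + 1 ≤ j) : g j = 0 := by simp [g, Nat.choose_eq_zero_of_lt hj]
  have hg_of_ge {j : ℕ} (hj : k ≤ j) : g j = 0 := by simp [g, demand, hj.not_gt]
  calc ∑ A ∈ R.powerset, demand (n - ℓ) k #A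
      = ∑ j ∈ range (ℓ + 1), g j := by simp only [sum_powerset_apply_card, smul_eq_mul]; rfl
    _ = ∑ j ∈ range (ℓ + 1 + k), g j :=
        (eventually_constant_sum (fun j hj => hg_of_le hj) (by omega)).symm
    _ = ∑ j ∈ range k, g j := eventually_constant_sum (fun j hj => hg_of_ge hj) (by omega)
    _ = ∑ j ∈ range k, ℓ.choose j * (n - ℓ - 1).choose (k - 1 - j) := by
        refine sum_congr rfl fun j hj => ?_
        simp [g, demand, mem_range.1 hj, Nat.sub_right_comm]
    _ = (n - 1).choose (k - 1) := by
        rw [show n - 1 = ℓ + (n - ℓ - 1) by omega, Nat.add_choose_eq,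
          Nat.sum_antidiagonal_eq_sum_range_succ_mk, Nat.succ_eq_add_one, Nat.sub_add_cancel hk]

lemma choose_mul_eq_choose {n k m : ℕ} (hk : 0 < k) (hn : n = m * k) :
    (n - 1).choose (k - 1) * m = n.choose k := by
  rcases Nat.eq_zero_or_pos n with rfl | hn0
  · simp [Nat.choose_eq_zero_of_lt hk, (mul_eq_zero.1 hn.symm).resolve_right hk.ne']
  refine Nat.eq_of_mul_eq_mul_right hk ?_
  have := Nat.add_one_mul_choose_eq (n - 1) (k - 1)
  rw [Nat.sub_add_cancel hn0, Nat.sub_add_cancel hk] at this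
  rw [mul_assoc, ← hn, mul_comm, this]


variable {α ι : Type*} [Fintype α] [DecidableEq α] [Fintype ι] {m k : ℕ}

structure IsPartial (k : ℕ) (R : Finset α) (f : ι → Fin m → Finset α) : Prop where
  subset : ∀ i j, f i j ⊆ R
  card_le : ∀ i j, #(f i j) ≤ k
  existsUnique_mem : ∀ i, ∀ x ∈ R, ∃! j, x ∈ f i j
  card_fiber : ∀ A ⊆ R, #A ≤ k →
    #{p : ι × Fin m | f p.1 p.2 = A} = (Fintype.card α - #R).choose (k - #A)

namespace IsPartial

variable {R : Finset α} {f : ι → Fin m → Finset α}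

lemma empty (h : Fintype.card ι * m = (Fintype.card α).choose k) :
    IsPartial k (∅ : Finset α) (fun (_ : ι) (_ : Fin m) => ∅) where
  subset _ _ := subset_rfl
  card_le _ _ := by simp
  existsUnique_mem _ _ hx := absurd hx (notMem_empty _)
  card_fiber A hA _ := by simp [subset_empty.1 hA, h]

lemma disjoint (h : IsPartial k R f) (i : ι) {j j' : Fin m} (hjj' : j ≠ j') :
    Disjoint (f i j) (f i j') :=
  disjoint_left.2 fun x hx hx' =>
    hjj' ((h.existsUnique_mem i x (h.subset i j hx)).unique hx hx')

lemma biUnion_eq (h : IsPartial k R f) (i : ι) : univ.biUnion (f i) = R := by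
  ext x
  simp only [mem_biUnion, mem_univ, true_and]
  exact ⟨fun ⟨j, hj⟩ => h.subset i j hj, fun hx => (h.existsUnique_mem i x hx).exists⟩

lemma sum_card (h : IsPartial k R f) (i : ι) : ∑ j, #(f i j) = #R := by
  rw [← h.biUnion_eq i, card_biUnion fun j _ j' _ hjj' => h.disjoint i hjj']

lemma sum_sub_card (h : IsPartial k R f) (hn : Fintype.card α = m * k) (i : ι) :
    ∑ j, (k - #(f i j)) = Fintype.card α - #R := by
  rw [sum_tsub_distrib univ fun j _ => h.card_le i j, h.sum_card]
  simp [hn]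

lemma card_le_sum_demand (h : IsPartial k R f) (hn : Fintype.card α = m * k)
    (hR : #R < Fintype.card α) (S : Finset ι) :
    #S ≤ ∑ A ∈ S.biUnion (fun i => univ.image (f i)), demand (Fintype.card α - #R) k #A := by
  set N := Fintype.card α - #R
  set P := S.biUnion fun i => univ.image (f i)
  have hP : (S ×ˢ univ).image (fun p : ι × Fin m => f p.1 p.2) = P := by ext; simp [P]
  refine Nat.le_of_mul_le_mul_right ?_ (Nat.sub_pos_of_lt hR)
  calc #S * N = ∑ p ∈ S ×ˢ univ, (k - #(f p.1 p.2)) := by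
        rw [sum_product, sum_congr rfl fun i _ => h.sum_sub_card hn i, sum_const, smul_eq_mul]
    _ = ∑ A ∈ P, #{p ∈ S ×ˢ univ | f p.1 p.2 = A} * (k - #A) := by
        rw [sum_comp (fun A => k - #A) (fun p : ι × Fin m => f p.1 p.2), hP]
        simp only [smul_eq_mul]
    _ ≤ ∑ A ∈ P, #{p : ι × Fin m | f p.1 p.2 = A} * (k - #A) := by
        gcongr
        exact subset_univ _
    _ = ∑ A ∈ P, demand N k #A * N := by
        refine sum_congr rfl fun A hA => ?_
        obtain ⟨i, -, j, -, rfl⟩ : ∃ i ∈ S, ∃ j ∈ univ, f i j = A := by simpa [P] using hA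
        rw [h.card_fiber _ (h.subset i j) (h.card_le i j), choose_mul_eq_demand_mul]
    _ = (∑ A ∈ P, demand N k #A) * N := (sum_mul _ _ _).symm

lemma exists_select (h : IsPartial k R f) (hk : 0 < k) (hn : Fintype.card α = m * k)
    (hι : Fintype.card ι = (Fintype.card α - 1).choose (k - 1)) (hR : #R < Fintype.card α) :
    ∃ s : ι → Fin m, (∀ i, #(f i (s i)) < k) ∧
      ∀ A ⊆ R, #{i | f i (s i) = A} = demand (Fintype.card α - #R) k #A := by
  obtain ⟨c, hc, hc_card⟩ := exists_card_fiber_eq_of_forall_card_le_sum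
    (fun i => univ.image (f i)) (fun A => demand (Fintype.card α - #R) k #A) R.powerset
    (fun i A hA => by obtain ⟨j, -, rfl⟩ := mem_image.1 hA; exact mem_powerset.2 (h.subset i j))
    (by rw [sum_powerset_demand hk R hR, hι]) (h.card_le_sum_demand hn hR)
  choose s hs using fun i => mem_image.1 (hc i)
  refine ⟨s, fun i => ?_, fun A hA => ?_⟩
  · have : 0 < demand (Fintype.card α - #R) k #(c i) := by
      rw [← hc_card (c i) (mem_powerset.2 ((hs i).2 ▸ h.subset i (s i)))]
      exact card_pos.2 ⟨i, by simp⟩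
    rw [(hs i).2]
    by_contra hge
    simp [demand, hge] at this
  · simpa only [(hs _).2] using hc_card A (mem_powerset.2 hA)

lemma extend (h : IsPartial k R f) {x : α} (hx : x ∉ R) {s : ι → Fin m}
    (hs_lt : ∀ i, #(f i (s i)) < k)
    (hs : ∀ A ⊆ R, #{i | f i (s i) = A} = demand (Fintype.card α - #R) k #A) :
    IsPartial k (insert x R) (fun i j => if j = s i then insert x (f i j) else f i j) where
  subset i j := by
    split_ifs
    exacts [insert_subset_insert _ (h.subset i j), (h.subset i j).trans (subset_insert _ _)]
  card_le i j := by
    split_ifs with hj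
    · subst hj
      rw [card_insert_of_notMem fun hx' => hx (h.subset _ _ hx')]
      exact hs_lt i
    · exact h.card_le i j
  existsUnique_mem i y hy := by
    rcases mem_insert.1 hy with rfl | hy
    · refine ⟨s i, by simp, fun j hj => ?_⟩
      by_contra hne
      simp only [hne, if_false] at hj
      exact hx (h.subset i j hj)
    · have hyx : y ≠ x := ne_of_mem_of_not_mem hy hx
      simpa only [apply_ite (y ∈ ·), mem_insert, hyx, false_or, ite_self]
        using h.existsUnique_mem i y hy
  card_fiber A hA hAk := by
    have hN : 0 < Fintype.card α - #R := Nat.sub_pos_of_lt (card_lt_univ_of_notMem hx)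
    have hx_notMem (i j) : x ∉ f i j := fun hx' => hx (h.subset i j hx')
    have hoff : #{p : ι × Fin m | p.2 ≠ s p.1 ∧
        (if p.2 = s p.1 then insert x (f p.1 p.2) else f p.1 p.2) = A} =
        #{p : ι × Fin m | p.2 ≠ s p.1 ∧ f p.1 p.2 = A} := by
      congr 1
      exact filter_congr fun p _ => by simp +contextual
    rw [card_filter_prod_eq_add s, hoff, card_insert_of_notMem hx, Nat.sub_add_eq]
    simp only [if_true]
    by_cases hxA : x ∈ A
    · have hon : ∀ i, insert x (f i (s i)) = A ↔ f i (s i) = A.erase x := fun i =>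
        ⟨fun hi => by rw [← hi, erase_insert (hx_notMem _ _)],
         fun hi => by rw [hi, insert_erase hxA]⟩
      have hoff0 : #{p : ι × Fin m | p.2 ≠ s p.1 ∧ f p.1 p.2 = A} = 0 := by
        simp only [card_eq_zero, filter_eq_empty_iff]
        exact fun p _ ⟨_, hp⟩ => hx_notMem p.1 p.2 (hp ▸ hxA)
      simp only [hon, hoff0, add_zero]
      have hA_pos : 0 < #A := card_pos.2 ⟨x, hxA⟩
      rw [hs _ (subset_insert_iff.1 hA), card_erase_of_mem hxA, demand, if_pos (by omega)]
      congr 1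
      omega
    · have hon0 : #{i | insert x (f i (s i)) = A} = 0 := by
        simp only [card_eq_zero, filter_eq_empty_iff]
        exact fun i _ hi => hxA (hi ▸ mem_insert_self x _)
      have hAR : A ⊆ R := (subset_insert_iff_of_notMem hxA).1 hA
      have hsplit := card_filter_prod_eq_add s (fun p => f p.1 p.2 = A)
      rw [h.card_fiber A hAR hAk, hs A hAR, choose_eq_demand_add hN] at hsplit
      omega

lemma card_eq_of_univ (h : IsPartial k (univ : Finset α) f) (i : ι) (j : Fin m) :
    #(f i j) = k := by
  have hpos : 0 < #{p : ι × Fin m | f p.1 p.2 = f i j} := card_pos.2 ⟨(i, j), by simp⟩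
  rw [h.card_fiber _ (subset_univ _) (h.card_le i j), card_univ, Nat.sub_self] at hpos
  have := h.card_le i j
  by_contra hne
  rw [Nat.choose_eq_zero_of_lt (by omega)] at hpos
  exact hpos.false

lemma existsUnique_of_univ (h : IsPartial k (univ : Finset α) f) {J : Finset α} (hJ : #J = k) :
    ∃! i, ∃ j, f i j = J := by
  have hone := h.card_fiber J (subset_univ _) hJ.le
  rw [card_univ, Nat.sub_self, hJ, Nat.sub_self, Nat.choose_self, card_eq_one] at hone
  obtain ⟨p, hp⟩ := hone
  have hmem (q : ι × Fin m) : f q.1 q.2 = J ↔ q = p := by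
    simpa using congrArg (q ∈ ·) hp
  exact ⟨p.1, ⟨p.2, (hmem p).2 rfl⟩, fun i ⟨j, hj⟩ => congrArg Prod.fst ((hmem (i, j)).1 hj)⟩

end IsPartial

lemma exists_isPartial (hk : 0 < k) (hn : Fintype.card α = m * k)
    (hι : Fintype.card ι = (Fintype.card α - 1).choose (k - 1)) (R : Finset α) :
    ∃ f : ι → Fin m → Finset α, IsPartial k R f := by
  induction R using Finset.induction_on with
  | empty => exact ⟨_, IsPartial.empty (hι ▸ choose_mul_eq_choose hk hn)⟩
  | insert x R hx ih =>
    obtain ⟨f, hf⟩ := ih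
    obtain ⟨s, hs_lt, hs⟩ := hf.exists_select hk hn hι (card_lt_univ_of_notMem hx)
    exact ⟨_, hf.extend hx hs_lt hs⟩

end Baranyai

open Baranyai in
/-- Baranyai's theorem: for `k ∣ n` the `k`-subsets of `[n]` can be
partitioned into `C(n−1,k−1)` perfect matchings. -/
theorem baranyai {n k : ℕ} (hk : 0 < k) (hdvd : k ∣ n) :
    ∃ P : Fin (Nat.choose (n - 1) (k - 1)) → Finset (Finset (Fin n)),
      (∀ i, ∀ J ∈ P i, J.card = k) ∧
      (∀ i, ∀ J ∈ P i, ∀ J' ∈ P i, J ≠ J' → Disjoint J J') ∧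
      (∀ i, (P i).biUnion id = Finset.univ) ∧
      (∀ J : Finset (Fin n), J.card = k → ∃! i, J ∈ P i) := by
  obtain ⟨m, rfl⟩ := hdvd
  obtain ⟨f, hf⟩ := exists_isPartial (α := Fin (k * m)) (ι := Fin ((k * m - 1).choose (k - 1)))
    (m := m) hk (by simp [mul_comm]) (by simp) univ
  refine ⟨fun i => univ.image (f i), ?_, ?_, ?_, ?_⟩
  · simp only [mem_image, mem_univ, true_and]
    rintro i _ ⟨j, rfl⟩
    exact hf.card_eq_of_univ i j
  · simp only [mem_image, mem_univ, true_and]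
    rintro i _ ⟨j, rfl⟩ _ ⟨j', rfl⟩ hne
    exact hf.disjoint i (ne_of_apply_ne _ hne)
  · intro i
    rw [image_biUnion]
    exact hf.biUnion_eq i
  · intro J hJ
    simpa using hf.existsUnique_of_univ hJ
end
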